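/- The stop poset is a unit for fork on labelled posets: fork_n(W, G) ≅ G where W ∈ P_Γ(n+1) is the poset with no labelled vertices whose (n+1)-th input is placed immediately below the distinguished element s (interpreting wait(a, stop) at the new input); and symmetrically fork_n(G', W') ≅ (the result of substituting the compound thread ID b for the bound parameter in G'), matching axioms fork(a.wait(a,stop), x) = x and fork(a.x(a), wait(b,stop)) = x(b). -/

import Mathlib

/-! (Γ,Σ)-labelled posets with holes: the representation of terms of the
theory of dynamic threads.  A labelled poset with `n` inputs has vertices
`V₁` labelled by actions, vertices `V₂` labelled by computation variables
(each with visibility data), a distinguished element `s` marking the end of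
the main thread, and a partial order on `[n] ⊎ V₁ ⊎ V₂ ⊎ {s}`. -/

/-- The carrier of a labelled poset with holes. -/
abbrev El (n : ℕ) (V₁ V₂ : Type) : Type := Fin n ⊕ V₁ ⊕ V₂ ⊕ Unit

/-- The distinguished element `s` (end of the main thread). -/
def sEl {n : ℕ} {V₁ V₂ : Type} : El n V₁ V₂ := .inr (.inr (.inr ()))

/-- A `(Γ,Σ)`-labelled poset with `n` inputs, where the computation-variable
context `Γ` is abstracted as a type `Var` of variables with arities `ar`. -/
structure LPH (L Var : Type) (ar : Var → ℕ) (n : ℕ) where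
  V₁ : Type
  V₂ : Type
  l₁ : V₁ → L
  l₂ : V₂ → Var
  vis : (e : V₂) → Fin (ar (l₂ e)) → Set (El n V₁ V₂)
  le : El n V₁ V₂ → El n V₁ V₂ → Prop

/-- Well-formedness of a labelled poset with holes (Definition of
well-formed posets): the order is a partial order with the inputs minimal
and `s` maximal; each visibility set contains its own vertex, omits `s`,
and is downward closed; and the transitive closure of the order together
with the visibility relation is antisymmetric. -/
def LPH.WF {L Var : Type} {ar : Var → ℕ} {n : ℕ} (P : LPH L Var ar n) : Prop :=
  Finite P.V₁ ∧ Finite P.V₂ ∧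
  (∀ x, P.le x x) ∧
  (∀ {x y z}, P.le x y → P.le y z → P.le x z) ∧
  (∀ {x y}, P.le x y → P.le y x → x = y) ∧
  (∀ x (i : Fin n), P.le x (.inl i) → x = .inl i) ∧
  (∀ y, P.le sEl y → y = sEl) ∧
  (∀ (e : P.V₂) (i : Fin (ar (P.l₂ e))),
    (.inr (.inr (.inl e)) : El n P.V₁ P.V₂) ∈ P.vis e i ∧
    sEl ∉ P.vis e i ∧
    (∀ x y, P.le x y → y ∈ P.vis e i → x ∈ P.vis e i)) ∧
  (∀ {x y},
    Relation.TransGen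
      (fun a b => P.le a b ∨
        ∃ (e : P.V₂) (i : Fin (ar (P.l₂ e))),
          b = (.inr (.inr (.inl e)) : El n P.V₁ P.V₂) ∧ a ∈ P.vis e i) x y →
    Relation.TransGen
      (fun a b => P.le a b ∨
        ∃ (e : P.V₂) (i : Fin (ar (P.l₂ e))),
          b = (.inr (.inr (.inl e)) : El n P.V₁ P.V₂) ∧ a ∈ P.vis e i) y x →
    x = y)

/-- Extend bijections on the labelled vertices to the whole carrier. -/
def mapEl {n : ℕ} {V₁ V₂ W₁ W₂ : Type} (f₁ : V₁ → W₁) (f₂ : V₂ → W₂) :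
    El n V₁ V₂ → El n W₁ W₂ :=
  Sum.map id (Sum.map f₁ (Sum.map f₂ id))

/-- Isomorphism of labelled posets with holes. -/
def LPH.Iso {L Var : Type} {ar : Var → ℕ} {n : ℕ} (P Q : LPH L Var ar n) :
    Prop :=
  ∃ (f₁ : P.V₁ ≃ Q.V₁) (f₂ : P.V₂ ≃ Q.V₂),
    (∀ v, Q.l₁ (f₁ v) = P.l₁ v) ∧
    ∃ h : ∀ e, Q.l₂ (f₂ e) = P.l₂ e,
      (∀ x y, P.le x y ↔ Q.le (mapEl f₁ f₂ x) (mapEl f₁ f₂ y)) ∧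
      (∀ (e : P.V₂) (i : Fin (ar (P.l₂ e))) x,
        x ∈ P.vis e i ↔
          mapEl f₁ f₂ x ∈ Q.vis (f₂ e) (Fin.cast (congrArg ar (h e)).symm i))

section Fork

variable {L Var : Type} {ar : Var → ℕ} {n : ℕ}

/-- View an element of `fork G₁ G₂` as an element of the parent `G₁` (the
shared inputs embed via `castSucc`; the `s` of the result is the `s` of the
parent). -/
def forkView₁ (G₁ : LPH L Var ar (n + 1)) (G₂ : LPH L Var ar n) :
    El n (G₁.V₁ ⊕ G₂.V₁) (G₁.V₂ ⊕ G₂.V₂) → Option (El (n + 1) G₁.V₁ G₁.V₂)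
  | .inl i => some (.inl i.castSucc)
  | .inr (.inl (.inl v)) => some (.inr (.inl v))
  | .inr (.inl (.inr _)) => none
  | .inr (.inr (.inl (.inl e))) => some (.inr (.inr (.inl e)))
  | .inr (.inr (.inl (.inr _))) => none
  | .inr (.inr (.inr _)) => some sEl

/-- View an element of `fork G₁ G₂` as an element of the child `G₂`. -/
def forkView₂ (G₁ : LPH L Var ar (n + 1)) (G₂ : LPH L Var ar n) :
    El n (G₁.V₁ ⊕ G₂.V₁) (G₁.V₂ ⊕ G₂.V₂) → Option (El n G₂.V₁ G₂.V₂)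
  | .inl i => some (.inl i)
  | .inr (.inl (.inl _)) => none
  | .inr (.inl (.inr v)) => some (.inr (.inl v))
  | .inr (.inr (.inl (.inl _)))  => none
  | .inr (.inr (.inl (.inr e))) => some (.inr (.inr (.inl e)))
  | .inr (.inr (.inr _)) => none

/-- The `fork` operation on labelled posets with holes: take the union of the
labelled vertices of the two posets, identify the `(n+1)`-th input of the
first (parent) poset with the `s` element of the second (child) poset, and
close the order under transitivity.  The visibility relation is obtained via
the same connection. -/
def LPH.fork (G₁ : LPH L Var ar (n + 1)) (G₂ : LPH L Var ar n) :
    LPH L Var ar n where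
  V₁ := G₁.V₁ ⊕ G₂.V₁
  V₂ := G₁.V₂ ⊕ G₂.V₂
  l₁ := Sum.elim G₁.l₁ G₂.l₁
  l₂ := Sum.elim G₁.l₂ G₂.l₂
  vis := fun e =>
    match e with
    | .inl e₁ => fun i =>
        {x | (∃ x', forkView₁ G₁ G₂ x = some x' ∧ x' ∈ G₁.vis e₁ i) ∨
          ((.inl (Fin.last n) : El (n + 1) G₁.V₁ G₁.V₂) ∈ G₁.vis e₁ i ∧
            ∃ x', forkView₂ G₁ G₂ x = some x' ∧ G₂.le x' sEl)}
    | .inr e₂ => fun i =>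
        {x | ∃ x', forkView₂ G₁ G₂ x = some x' ∧ x' ∈ G₂.vis e₂ i}
  le := fun x y =>
    (∃ x' y', forkView₁ G₁ G₂ x = some x' ∧ forkView₁ G₁ G₂ y = some y' ∧
      G₁.le x' y') ∨
    (∃ x' y', forkView₂ G₁ G₂ x = some x' ∧ forkView₂ G₁ G₂ y = some y' ∧
      G₂.le x' y') ∨
    (∃ x' y', forkView₂ G₁ G₂ x = some x' ∧ forkView₁ G₁ G₂ y = some y' ∧
      G₂.le x' sEl ∧ G₁.le (.inl (Fin.last n)) y')

end Fork

/-- Reindex the inputs of a labelled poset along a function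
`f : Fin n → Fin n'`. -/
def LPH.rename {L Var : Type} {ar : Var → ℕ} {n n' : ℕ} (f : Fin n → Fin n')
    (G : LPH L Var ar n) : LPH L Var ar n' where
  V₁ := G.V₁
  V₂ := G.V₂
  l₁ := G.l₁
  l₂ := G.l₂
  vis := fun e i =>
    {x | match x with
      | .inl i' => ∃ i₀, f i₀ = i' ∧ (.inl i₀ : El n G.V₁ G.V₂) ∈ G.vis e i
      | .inr c => (.inr c : El n G.V₁ G.V₂) ∈ G.vis e i}
  le := fun x y =>
    match x, y with
    | .inl i', .inl j' => i' = j'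
    | .inl i', .inr c => ∃ i, f i = i' ∧ G.le (.inl i) (.inr c)
    | .inr _, .inl _ => False
    | .inr c, .inr c' => G.le (.inr c) (.inr c')

/-- The reindexing `Fin (n+1) → Fin (n+2)` which is the inclusion on the
first `n` inputs and sends the last input to the (new) last input. -/
def shiftLast (n : ℕ) : Fin (n + 1) → Fin (n + 2) := fun i =>
  if h : i.val < n then ⟨i.val, by omega⟩ else Fin.last (n + 1)

section Unit

variable {L Var : Type} {ar : Var → ℕ} {n : ℕ}

/-- The `wait` operation: add a new input `n+1` connected below all the
labelled elements and below `s`. -/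
def LPH.wait (G : LPH L Var ar n) : LPH L Var ar (n + 1) where
  V₁ := G.V₁
  V₂ := G.V₂
  l₁ := G.l₁
  l₂ := G.l₂
  vis := fun e i =>
    {x | match x with
      | .inl j =>
          if h : j.val < n then (.inl ⟨j.val, h⟩ : El n G.V₁ G.V₂) ∈ G.vis e i
          else False
      | .inr c => (.inr c : El n G.V₁ G.V₂) ∈ G.vis e i}
  le := fun x y =>
    match x, y with
    | .inl i, .inl j => i = j
    | .inl i, .inr c =>
        if h : i.val < n then G.le (.inl ⟨i.val, h⟩) (.inr c) else True
    | .inr _, .inl _ => False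
    | .inr c, .inr c' => G.le (.inr c) (.inr c')

/-- The `stop` poset: only the `n` inputs and `s`, no labelled vertices,
discrete order. -/
def stopLPH (L Var : Type) (ar : Var → ℕ) (n : ℕ) : LPH L Var ar n where
  V₁ := Empty
  V₂ := Empty
  l₁ := Empty.elim
  l₂ := Empty.elim
  vis := fun e => e.elim
  le := fun x y => x = y

/-- The poset of `wait(b, stop)`: no labelled vertices, the inputs in the
compound thread ID `B` placed below `s`. -/
def waitStopLPH (L Var : Type) (ar : Var → ℕ) {n : ℕ} (B : Set (Fin n)) :
    LPH L Var ar n where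
  V₁ := Empty
  V₂ := Empty
  l₁ := Empty.elim
  l₂ := Empty.elim
  vis := fun e => e.elim
  le := fun x y => x = y ∨
    (match x, y with
      | .inl i, .inr (.inr (.inr _)) => i ∈ B
      | _, _ => False)

/-- Substitute the compound thread ID `B` for the last (bound) input of a
labelled poset. -/
def LPH.inst (G : LPH L Var ar (n + 1)) (B : Set (Fin n)) :
    LPH L Var ar n where
  V₁ := G.V₁
  V₂ := G.V₂
  l₁ := G.l₁
  l₂ := G.l₂
  vis := fun e i =>
    {x | match x with
      | .inl j => (.inl j.castSucc : El (n + 1) G.V₁ G.V₂) ∈ G.vis e i ∨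
          (j ∈ B ∧ (.inl (Fin.last n) : El (n + 1) G.V₁ G.V₂) ∈ G.vis e i)
      | .inr c => (.inr c : El (n + 1) G.V₁ G.V₂) ∈ G.vis e i}
  le := fun x y =>
    match x, y with
    | .inl i, .inl j => i = j
    | .inl i, .inr c => G.le (.inl i.castSucc) (.inr c) ∨
        (i ∈ B ∧ G.le (.inl (Fin.last n)) (.inr c))
    | .inr _, .inl _ => False
    | .inr c, .inr c' => G.le (.inr c) (.inr c')

/-! In both laws one side of the fork has no labelled vertices, so the isomorphism is the
canonical `Empty ⊕ V ≃ V` (resp. `V ⊕ Empty ≃ V`) and only the orders and visibility sets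
have to be compared, case by case on the kinds of elements.  In `fork (wait stop) G` the parent
contributes only the edge from its last input to `s`, which the fork glues onto the `s` of `G`;
reflexivity of `G` and maximality of `s` make the glued order agree with that of `G`.  In
`fork G' (wait(B, stop))` the child contributes the edges `i ≤ s` for `i ∈ B`, which after
gluing become edges below the last input of `G'`, i.e. the substitution of `B` for that input;
minimality of the inputs of `G'` removes the spurious pairs between inputs. -/

theorem LPH.WF.le_refl {G : LPH L Var ar n} (hG : G.WF) : ∀ x, G.le x x :=
  hG.2.2.1

theorem LPH.WF.eq_of_le_inl {G : LPH L Var ar n} (hG : G.WF) :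
    ∀ x i, G.le x (.inl i) → x = .inl i :=
  hG.2.2.2.2.2.1

theorem LPH.WF.eq_of_sEl_le {G : LPH L Var ar n} (hG : G.WF) : ∀ y, G.le sEl y → y = sEl :=
  hG.2.2.2.2.2.2.1

theorem LPH.WF.sEl_notMem_vis {G : LPH L Var ar n} (hG : G.WF) : ∀ e i, sEl ∉ G.vis e i :=
  fun e i => (hG.2.2.2.2.2.2.2.1 e i).2.1

theorem LPH.mem_fork_vis_inl (G₁ : LPH L Var ar (n + 1)) (G₂ : LPH L Var ar n) (e : G₁.V₂)
    (i : Fin (ar (G₁.l₂ e))) (x : El n (G₁.V₁ ⊕ G₂.V₁) (G₁.V₂ ⊕ G₂.V₂)) :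
    x ∈ (G₁.fork G₂).vis (.inl e) i ↔
      (∃ x', forkView₁ G₁ G₂ x = some x' ∧ x' ∈ G₁.vis e i) ∨
        ((.inl (Fin.last n) : El (n + 1) G₁.V₁ G₁.V₂) ∈ G₁.vis e i ∧
          ∃ x', forkView₂ G₁ G₂ x = some x' ∧ G₂.le x' sEl) :=
  Iff.rfl

theorem LPH.mem_fork_vis_inr (G₁ : LPH L Var ar (n + 1)) (G₂ : LPH L Var ar n) (e : G₂.V₂)
    (i : Fin (ar (G₂.l₂ e))) (x : El n (G₁.V₁ ⊕ G₂.V₁) (G₁.V₂ ⊕ G₂.V₂)) :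
    x ∈ (G₁.fork G₂).vis (.inr e) i ↔ ∃ x', forkView₂ G₁ G₂ x = some x' ∧ x' ∈ G₂.vis e i :=
  Iff.rfl

theorem LPH.mem_inst_vis_inl (G : LPH L Var ar (n + 1)) (B : Set (Fin n)) (e : G.V₂)
    (i : Fin (ar (G.l₂ e))) (j : Fin n) :
    (.inl j : El n G.V₁ G.V₂) ∈ (G.inst B).vis e i ↔
      (.inl j.castSucc : El (n + 1) G.V₁ G.V₂) ∈ G.vis e i ∨
        (j ∈ B ∧ (.inl (Fin.last n) : El (n + 1) G.V₁ G.V₂) ∈ G.vis e i) :=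
  Iff.rfl

theorem LPH.mem_inst_vis_inr (G : LPH L Var ar (n + 1)) (B : Set (Fin n)) (e : G.V₂)
    (i : Fin (ar (G.l₂ e))) (c : G.V₁ ⊕ G.V₂ ⊕ Unit) :
    (.inr c : El n G.V₁ G.V₂) ∈ (G.inst B).vis e i ↔
      (.inr c : El (n + 1) G.V₁ G.V₂) ∈ G.vis e i :=
  Iff.rfl

theorem LPH.wait_stop_fork_le_iff (G : LPH L Var ar n) (hrefl : ∀ x, G.le x x)
    (hs : ∀ y, G.le sEl y → y = sEl) (x y : El n (Empty ⊕ G.V₁) (Empty ⊕ G.V₂)) :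
    ((stopLPH L Var ar n).wait.fork G).le x y ↔
      G.le (mapEl (Equiv.emptySum _ _) (Equiv.emptySum _ _) x)
        (mapEl (Equiv.emptySum _ _) (Equiv.emptySum _ _) y) := by
  have hs_not_le : ∀ y, y ≠ sEl → ¬ G.le sEl y := fun y hy h => hy (hs y h)
  simp only [sEl] at hs_not_le
  rcases x with i | (⟨⟨⟩⟩ | v) | (⟨⟨⟩⟩ | e) | ⟨⟨⟩⟩ <;>
  rcases y with j | (⟨⟨⟩⟩ | w) | (⟨⟨⟩⟩ | f) | ⟨⟨⟩⟩ <;>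
  simp [LPH.fork, LPH.wait, stopLPH, forkView₁, forkView₂, mapEl, sEl, hrefl, hs_not_le,
    (Fin.castSucc_ne_last _).symm]
  rintro rfl
  exact hrefl _

theorem LPH.wait_stop_fork_vis_iff (G : LPH L Var ar n) (hvis : ∀ e i, sEl ∉ G.vis e i)
    (e : G.V₂) (i : Fin (ar (G.l₂ e))) (x : El n (Empty ⊕ G.V₁) (Empty ⊕ G.V₂)) :
    x ∈ ((stopLPH L Var ar n).wait.fork G).vis (.inr e) i ↔
      mapEl (Equiv.emptySum _ _) (Equiv.emptySum _ _) x ∈ G.vis e i := by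
  refine (LPH.mem_fork_vis_inr (stopLPH L Var ar n).wait G e i x).trans ?_
  rcases x with j | (⟨⟨⟩⟩ | v) | (⟨⟨⟩⟩ | f) | ⟨⟨⟩⟩ <;>
  simp [forkView₂, mapEl]
  exact hvis e i

theorem LPH.wait_stop_fork_iso (G : LPH L Var ar n) (hrefl : ∀ x, G.le x x)
    (hs : ∀ y, G.le sEl y → y = sEl) (hvis : ∀ e i, sEl ∉ G.vis e i) :
    ((stopLPH L Var ar n).wait.fork G).Iso G := by
  refine ⟨Equiv.emptySum Empty G.V₁, Equiv.emptySum Empty G.V₂, ?_, ?_,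
    G.wait_stop_fork_le_iff hrefl hs, ?_⟩
  · rintro (⟨⟨⟩⟩ | v)
    rfl
  · rintro (⟨⟨⟩⟩ | e)
    rfl
  · rintro (⟨⟨⟩⟩ | e) i x
    exact G.wait_stop_fork_vis_iff hvis e i x

theorem LPH.fork_waitStop_le_iff (G : LPH L Var ar (n + 1)) (B : Set (Fin n))
    (hmin : ∀ x i, G.le x (.inl i) → x = .inl i)
    (x y : El n (G.V₁ ⊕ Empty) (G.V₂ ⊕ Empty)) :
    (G.fork (waitStopLPH L Var ar B)).le x y ↔
      (G.inst B).le (mapEl (Equiv.sumEmpty G.V₁ Empty) (Equiv.sumEmpty G.V₂ Empty) x)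
        (mapEl (Equiv.sumEmpty G.V₁ Empty) (Equiv.sumEmpty G.V₂ Empty) y) := by
  have hmin_not_le : ∀ x i, x ≠ .inl i → ¬ G.le x (.inl i) := fun x i hx h => hx (hmin x i h)
  rcases x with i | (v | ⟨⟨⟩⟩) | (e | ⟨⟨⟩⟩) | ⟨⟨⟩⟩ <;>
  rcases y with j | (w | ⟨⟨⟩⟩) | (f | ⟨⟨⟩⟩) | ⟨⟨⟩⟩ <;>
  simp [LPH.fork, LPH.inst, waitStopLPH, forkView₁, forkView₂, mapEl, sEl, hmin_not_le]
  refine ⟨?_, fun h => .inr (.inl h)⟩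
  rintro (h | rfl | ⟨-, h⟩)
  · simpa [(Fin.castSucc_ne_last j).symm] using hmin _ _ h
  · rfl
  · simpa [(Fin.castSucc_ne_last j).symm] using hmin _ _ h

theorem LPH.fork_waitStop_vis_iff (G : LPH L Var ar (n + 1)) (B : Set (Fin n))
    (e : G.V₂) (i : Fin (ar (G.l₂ e))) (x : El n (G.V₁ ⊕ Empty) (G.V₂ ⊕ Empty)) :
    x ∈ (G.fork (waitStopLPH L Var ar B)).vis (.inl e) i ↔
      mapEl (Equiv.sumEmpty G.V₁ Empty) (Equiv.sumEmpty G.V₂ Empty) x ∈ (G.inst B).vis e i := by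
  refine (LPH.mem_fork_vis_inl G (waitStopLPH L Var ar B) e i x).trans ?_
  rcases x with j | (v | ⟨⟨⟩⟩) | (f | ⟨⟨⟩⟩) | ⟨⟨⟩⟩ <;>
  simp [waitStopLPH, forkView₁, forkView₂, mapEl, sEl, LPH.mem_inst_vis_inl,
    LPH.mem_inst_vis_inr, and_comm]

theorem LPH.fork_waitStop_iso (G : LPH L Var ar (n + 1)) (B : Set (Fin n))
    (hmin : ∀ x i, G.le x (.inl i) → x = .inl i) :
    (G.fork (waitStopLPH L Var ar B)).Iso (G.inst B) := by
  refine ⟨Equiv.sumEmpty G.V₁ Empty, Equiv.sumEmpty G.V₂ Empty, ?_, ?_,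
    G.fork_waitStop_le_iff B hmin, ?_⟩
  · rintro (v | ⟨⟨⟩⟩)
    rfl
  · rintro (e | ⟨⟨⟩⟩)
    rfl
  · rintro (e | ⟨⟨⟩⟩) i x
    exact G.fork_waitStop_vis_iff B e i x

/-- the stop poset is a unit for fork on labelled posets:
`fork_n(W, G) ≅ G` where `W = wait_n(stop)` interprets `a.wait(a, stop)`
(axiom `fork(a.wait(a,stop), x) = x`); and symmetrically
`fork_n(G', wait(B, stop)) ≅ G'[B]`, the substitution of the compound thread
ID `B` for the bound input of `G'`
(axiom `fork(a.x(a), wait(b,stop)) = x(b)`). -/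
theorem fork_unit_laws {L Var : Type} {ar : Var → ℕ} {n : ℕ} :
    (∀ G : LPH L Var ar n, G.WF →
      (((stopLPH L Var ar n).wait).fork G).Iso G) ∧
    (∀ (G' : LPH L Var ar (n + 1)) (B : Set (Fin n)), G'.WF →
      (G'.fork (waitStopLPH L Var ar B)).Iso (G'.inst B)) :=
  ⟨fun G hG => G.wait_stop_fork_iso hG.le_refl hG.eq_of_sEl_le hG.sEl_notMem_vis,
    fun G' B hG' => G'.fork_waitStop_iso B hG'.eq_of_le_inl⟩

end Unit
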